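/- arXiv:2010.11665 — 2 statements merged into one kernel-verified Lean document; each statement's English description precedes it below -/
import Mathlib

section
/- For a ≥ 0 define f_a(x) = log Ψ(x) − x/2 − (1/(4x))·tanh(x/2)·(a² − x²) for x ≠ 0. Then f_a(−x) = f_a(x) for all x ≠ 0, and if a > 0 then f_a attains its maximum over ℝ∖{0} exactly at x = a and x = −a; that is, f_a(x) ≤ f_a(a) for all x ≠ 0, with strict inequality whenever x ∉ {a, −a}. -/
/-- The logistic function `Ψ(t) = eᵗ/(1+eᵗ)`. -/
noncomputable def logistic (t : ℝ) : ℝ := Real.exp t / (1 + Real.exp t)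

lemma log_logistic_eq (x : ℝ) :
    Real.log (logistic x) - x / 2 = - Real.log (2 * Real.cosh (x / 2)) := by
  have h1 : (0:ℝ) < 1 + Real.exp x := by positivity
  have h2 : 2 * Real.cosh (x / 2) = Real.exp (-(x/2)) * (1 + Real.exp x) := by
    rw [Real.cosh_eq, mul_add, mul_one, ← Real.exp_add]
    ring_nf
  rw [show logistic x = Real.exp x / (1 + Real.exp x) from rfl,
    Real.log_div (Real.exp_pos x).ne' h1.ne', Real.log_exp, h2,
    Real.log_mul (Real.exp_ne_zero _) h1.ne', Real.log_exp]
  ring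

lemma hasDerivAt_tanh (x : ℝ) :
    HasDerivAt Real.tanh (1 / Real.cosh x ^ 2) x := by
  have h := (Real.hasDerivAt_sinh x).div (Real.hasDerivAt_cosh x) (Real.cosh_pos x).ne'
  have hf : (fun y => Real.sinh y / Real.cosh y) = Real.tanh := by
    funext y; rw [Real.tanh_eq_sinh_div_cosh]
  rw [show (Real.sinh / Real.cosh) = Real.tanh from hf] at h
  refine h.congr_deriv ?_
  have := Real.cosh_sq_sub_sinh_sq x
  have hc := (Real.cosh_pos x).ne'
  rw [div_left_inj' (pow_ne_zero 2 hc)]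
  nlinarith [Real.cosh_sq_sub_sinh_sq x]

lemma q_strictAntiOn : StrictAntiOn (fun t : ℝ => Real.tanh t / t) (Set.Ioi 0) := by
  have hderiv : ∀ t : ℝ, 0 < t →
      HasDerivAt (fun t : ℝ => Real.tanh t / t)
        ((1 / Real.cosh t ^ 2 * t - Real.tanh t * 1) / t ^ 2) t := by
    intro t ht
    exact (hasDerivAt_tanh t).div (hasDerivAt_id t) ht.ne'
  apply strictAntiOn_of_deriv_neg (convex_Ioi 0)
  · exact fun t ht => ((hderiv t ht).continuousAt).continuousWithinAt
  · intro t ht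
    rw [interior_Ioi] at ht
    rw [(hderiv t ht).deriv]
    have hc := Real.cosh_pos t
    have h1 := Real.one_le_cosh t
    have hs : t < Real.sinh t := Real.self_lt_sinh_iff.mpr ht
    have hsp : 0 < Real.sinh t := lt_trans ht hs
    have hnum : 1 / Real.cosh t ^ 2 * t - Real.tanh t * 1 < 0 := by
      rw [Real.tanh_eq_sinh_div_cosh, mul_one]
      have heq : 1 / Real.cosh t ^ 2 * t - Real.sinh t / Real.cosh t
          = (t - Real.sinh t * Real.cosh t) / Real.cosh t ^ 2 := by
        field_simp
      rw [heq]
      apply div_neg_of_neg_of_pos _ (pow_pos hc 2)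
      nlinarith [mul_le_mul_of_nonneg_left h1 hsp.le]
    exact div_neg_of_neg_of_pos hnum (pow_pos ht 2)

lemma hasDerivAt_phi {s : ℝ} (hs : 0 < s) :
    HasDerivAt (fun s : ℝ => Real.log (Real.cosh (Real.sqrt s)))
      (Real.tanh (Real.sqrt s) / (2 * Real.sqrt s)) s := by
  have h1 := Real.hasDerivAt_sqrt hs.ne'
  have h2 := (Real.hasDerivAt_cosh (Real.sqrt s)).comp s h1
  have h3 := h2.log (Real.cosh_pos _).ne'
  convert h3 using 1
  have hsq : Real.sqrt s ≠ 0 := (Real.sqrt_pos.mpr hs).ne'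
  have hc := (Real.cosh_pos (Real.sqrt s)).ne'
  simp only [Function.comp_apply]
  rw [Real.tanh_eq_sinh_div_cosh]
  field_simp
  rw [Function.comp_apply, div_self (Real.cosh_pos _).ne']

lemma phi'_lt {s₁ s₂ : ℝ} (h1 : 0 < s₁) (h2 : s₁ < s₂) :
    Real.tanh (Real.sqrt s₂) / (2 * Real.sqrt s₂)
      < Real.tanh (Real.sqrt s₁) / (2 * Real.sqrt s₁) := by
  have hr1 : (0:ℝ) < Real.sqrt s₁ := Real.sqrt_pos.mpr h1
  have hr2 : Real.sqrt s₁ < Real.sqrt s₂ := Real.sqrt_lt_sqrt h1.le h2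
  have := q_strictAntiOn (Set.mem_Ioi.mpr hr1) (Set.mem_Ioi.mpr (hr1.trans hr2)) hr2
  simp only at this
  calc Real.tanh (Real.sqrt s₂) / (2 * Real.sqrt s₂)
      = (Real.tanh (Real.sqrt s₂) / Real.sqrt s₂) / 2 := by ring
    _ < (Real.tanh (Real.sqrt s₁) / Real.sqrt s₁) / 2 := by linarith
    _ = Real.tanh (Real.sqrt s₁) / (2 * Real.sqrt s₁) := by ring

/-- Key tangent-line inequality from strict concavity of `s ↦ log cosh √s`. -/
lemma tangent_lt {u b : ℝ} (hu : 0 < u) (hb : 0 < b) (hne : u ≠ b) :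
    Real.log (Real.cosh b) - Real.log (Real.cosh u)
      + Real.tanh u / (2 * u) * (u ^ 2 - b ^ 2) < 0 := by
  set φ : ℝ → ℝ := fun s => Real.log (Real.cosh (Real.sqrt s)) with hφ
  set φ' : ℝ → ℝ := fun s => Real.tanh (Real.sqrt s) / (2 * Real.sqrt s) with hφ'
  have hsu : Real.sqrt (u ^ 2) = u := by
    rw [Real.sqrt_sq hu.le]
  have hsb : Real.sqrt (b ^ 2) = b := by
    rw [Real.sqrt_sq hb.le]
  have hub : Real.log (Real.cosh u) = φ (u ^ 2) := by simp [hφ, hsu]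
  have hbb : Real.log (Real.cosh b) = φ (b ^ 2) := by simp [hφ, hsb]
  have hd : Real.tanh u / (2 * u) = φ' (u ^ 2) := by simp [hφ', hsu]
  rw [hub, hbb, hd]
  rcases lt_or_gt_of_ne hne with h | h
  · -- u < b, so u^2 < b^2 : MVT on [u², b²]
    have hlt : u ^ 2 < b ^ 2 := by nlinarith
    have hpos : (0:ℝ) < u ^ 2 := by positivity
    obtain ⟨c, hc, hceq⟩ := exists_hasDerivAt_eq_slope φ φ' hlt
      (fun x hx => (hasDerivAt_phi (lt_of_lt_of_le hpos hx.1)).continuousAt.continuousWithinAt)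
      (fun x hx => hasDerivAt_phi (hpos.trans hx.1))
    have hlt2 : φ' c < φ' (u ^ 2) := phi'_lt hpos hc.1
    have hslope : φ (b ^ 2) - φ (u ^ 2) = φ' c * (b ^ 2 - u ^ 2) :=
      (div_eq_iff (sub_ne_zero.mpr hlt.ne')).mp hceq.symm
    nlinarith [hlt2, hslope, sub_pos.mpr hlt]
  · -- b < u : MVT on [b², u²]
    have hlt : b ^ 2 < u ^ 2 := by nlinarith
    have hpos : (0:ℝ) < b ^ 2 := by positivity
    obtain ⟨c, hc, hceq⟩ := exists_hasDerivAt_eq_slope φ φ' hlt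
      (fun x hx => (hasDerivAt_phi (lt_of_lt_of_le hpos hx.1)).continuousAt.continuousWithinAt)
      (fun x hx => hasDerivAt_phi (hpos.trans hx.1))
    have hlt2 : φ' (u ^ 2) < φ' c := by
      have := phi'_lt (hpos.trans hc.1) hc.2
      exact this
    have hslope : φ (u ^ 2) - φ (b ^ 2) = φ' c * (u ^ 2 - b ^ 2) :=
      (div_eq_iff (sub_ne_zero.mpr hlt.ne')).mp hceq.symm
    nlinarith [hlt2, hslope, sub_pos.mpr hlt]

/-- The core strict inequality in terms of `y = |x| > 0`. -/
lemma core_lt (a : ℝ) {y : ℝ} (hy : 0 < y) (ha : 0 < a) (hne : y ≠ a) :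
    - Real.log (2 * Real.cosh (y / 2)) - 1 / (4 * y) * Real.tanh (y / 2) * (a ^ 2 - y ^ 2)
      < - Real.log (2 * Real.cosh (a / 2)) := by
  have key := tangent_lt (u := y / 2) (b := a / 2) (by linarith) (by linarith)
    (fun h => hne (by linarith))
  have e1 : Real.log (2 * Real.cosh (y / 2))
      = Real.log 2 + Real.log (Real.cosh (y / 2)) :=
    Real.log_mul two_ne_zero (Real.cosh_pos _).ne'
  have e2 : Real.log (2 * Real.cosh (a / 2))
      = Real.log 2 + Real.log (Real.cosh (a / 2)) :=
    Real.log_mul two_ne_zero (Real.cosh_pos _).ne'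
  have e3 : Real.tanh (y / 2) / (2 * (y / 2)) * ((y / 2) ^ 2 - (a / 2) ^ 2)
      = - (1 / (4 * y) * Real.tanh (y / 2) * (a ^ 2 - y ^ 2)) := by
    field_simp
    ring
  rw [e3] at key
  linarith

/-- Rewriting the objective in an even form via `|x|`. -/
lemma lhs_abs (a x : ℝ) (hx : x ≠ 0) :
    Real.log (logistic x) - x / 2 - 1 / (4 * x) * Real.tanh (x / 2) * (a ^ 2 - x ^ 2)
      = - Real.log (2 * Real.cosh (|x| / 2))
        - 1 / (4 * |x|) * Real.tanh (|x| / 2) * (a ^ 2 - |x| ^ 2) := by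
  have h := log_logistic_eq x
  rcases abs_cases x with ⟨h1, _⟩ | ⟨h1, _⟩
  · rw [h1]; linarith
  · rw [h1, neg_div, Real.cosh_neg, Real.tanh_neg]
    have hx4 : (4:ℝ) * x ≠ 0 := by simp [hx]
    have : 1 / (4 * -x) * -Real.tanh (x / 2) = 1 / (4 * x) * Real.tanh (x / 2) := by
      field_simp
    rw [this]
    have hsq : (-x : ℝ) ^ 2 = x ^ 2 := by ring
    rw [hsq]
    linarith

/-- For `a ≥ 0`, the function
`f_a(x) = log Ψ(x) − x/2 − (1/(4x))·tanh(x/2)·(a² − x²)` (for `x ≠ 0`)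
is symmetric about zero, and for `a > 0` it attains its maximum over `ℝ∖{0}`
exactly at `x = a` and `x = −a`. -/
theorem logistic_bound_maximizer (a : ℝ) (ha : 0 ≤ a) :
    (∀ x : ℝ, x ≠ 0 →
        (fun x : ℝ => Real.log (logistic x) - x / 2
            - (1 / (4 * x)) * Real.tanh (x / 2) * (a ^ 2 - x ^ 2)) (-x)
          = (fun x : ℝ => Real.log (logistic x) - x / 2
            - (1 / (4 * x)) * Real.tanh (x / 2) * (a ^ 2 - x ^ 2)) x) ∧
    (0 < a →
      (∀ x : ℝ, x ≠ 0 →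
          Real.log (logistic x) - x / 2
              - (1 / (4 * x)) * Real.tanh (x / 2) * (a ^ 2 - x ^ 2)
            ≤ Real.log (logistic a) - a / 2
              - (1 / (4 * a)) * Real.tanh (a / 2) * (a ^ 2 - a ^ 2)) ∧
      (∀ x : ℝ, x ≠ 0 → x ≠ a → x ≠ -a →
          Real.log (logistic x) - x / 2
              - (1 / (4 * x)) * Real.tanh (x / 2) * (a ^ 2 - x ^ 2)
            < Real.log (logistic a) - a / 2
              - (1 / (4 * a)) * Real.tanh (a / 2) * (a ^ 2 - a ^ 2))) := by
  have hRHS : ∀ b : ℝ, Real.log (logistic b) - b / 2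
      - 1 / (4 * b) * Real.tanh (b / 2) * (b ^ 2 - b ^ 2)
      = - Real.log (2 * Real.cosh (b / 2)) := by
    intro b
    have := log_logistic_eq b
    rw [sub_self, mul_zero, sub_zero]
    linarith
  refine ⟨?_, ?_⟩
  · intro x hx
    simp only
    rw [lhs_abs a x hx, lhs_abs a (-x) (neg_ne_zero.mpr hx), abs_neg]
  · intro hapos
    constructor
    · intro x hx
      rw [hRHS a, lhs_abs a x hx]
      rcases eq_or_ne |x| a with habs | habs
      · rw [habs, sub_self, mul_zero, sub_zero]
      · exact le_of_lt (core_lt a (abs_pos.mpr hx) hapos habs)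
    · intro x hx hxa hxna
      rw [hRHS a, lhs_abs a x hx]
      have habs : |x| ≠ a := by
        intro h
        rcases abs_eq ha |>.mp h with h' | h'
        · exact hxa h'
        · exact hxna h'
      exact core_lt a (abs_pos.mpr hx) hapos habs
end

section
/- Let S ⊆ {1,…,p}, let θ_S ∈ ℝ^{|S|}, and let θ̄_S ∈ ℝ^p denote the extension of θ_S by zeros outside S. Then for every y ∈ ℝ^n, 𝓛_{n,θ̄_S}(y) ≥ −(1/4)·‖X_S(θ_S − θ_{0,S})‖₂² − (1/4)·‖X_{Sᶜ}θ_{0,Sᶜ}‖₂², where θ_{0,S} and θ_{0,Sᶜ} are the restrictions of θ₀ to S and to its complement, and X_S, X_{Sᶜ} are the corresponding column submatrices of X. -/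
/-- The logistic log-likelihood `ℓ_{n,θ}(y) = Σᵢ [yᵢ·x_iᵀθ − log(1+e^{x_iᵀθ})]`. -/
noncomputable def loglik {n p : ℕ} (X : Fin n → Fin p → ℝ) (θ : Fin p → ℝ)
    (y : Fin n → ℝ) : ℝ :=
  ∑ i, (y i * (∑ j, X i j * θ j) - Real.log (1 + Real.exp (∑ j, X i j * θ j)))

/-- The first-order Taylor remainder
`𝓛_{n,θ}(y) = ℓ_{n,θ}(y) − ℓ_{n,θ₀}(y) − ∇ℓ_{n,θ₀}(y)ᵀ(θ−θ₀)`. -/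
noncomputable def taylorRem {n p : ℕ} (X : Fin n → Fin p → ℝ) (θ₀ θ : Fin p → ℝ)
    (y : Fin n → ℝ) : ℝ :=
  loglik X θ y - loglik X θ₀ y
    - fderiv ℝ (fun ϑ => loglik X ϑ y) θ₀ (θ - θ₀)

noncomputable def lphi (t : ℝ) : ℝ := Real.log (1 + Real.exp t)
noncomputable def lsig (t : ℝ) : ℝ := Real.exp t / (1 + Real.exp t)

lemma one_add_exp_pos (t : ℝ) : (0:ℝ) < 1 + Real.exp t := by positivity

lemma hasDerivAt_lphi (t : ℝ) : HasDerivAt lphi (lsig t) t := by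
  have h : HasDerivAt (fun s => 1 + Real.exp s) (Real.exp t) t :=
    (Real.hasDerivAt_exp t).const_add 1
  have := h.log (one_add_exp_pos t).ne'
  exact this

lemma hasDerivAt_lsig (t : ℝ) :
    HasDerivAt lsig (Real.exp t / (1 + Real.exp t) ^ 2) t := by
  have h : HasDerivAt (fun s => 1 + Real.exp s) (Real.exp t) t :=
    (Real.hasDerivAt_exp t).const_add 1
  have := (Real.hasDerivAt_exp t).div h (one_add_exp_pos t).ne'
  refine this.congr_deriv ?_
  ring

lemma sig_deriv_le (t : ℝ) : Real.exp t / (1 + Real.exp t) ^ 2 ≤ 1/4 := by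
  have h := one_add_exp_pos t
  rw [div_le_iff₀ (by positivity)]
  nlinarith [sq_nonneg (1 - Real.exp t), Real.exp_pos t]

lemma key_ineq (a b : ℝ) : lphi a - lphi b - lsig b * (a - b) ≤ 1/8 * (a - b)^2 := by
  set g : ℝ → ℝ := fun t => 1/8 * (t - b)^2 + lsig b * (t - b) + lphi b - lphi t with hg
  set g' : ℝ → ℝ := fun t => 1/4 * (t - b) + lsig b - lsig t with hg'
  have hdg : ∀ t, HasDerivAt g (g' t) t := by
    intro t
    have h1 : HasDerivAt (fun t : ℝ => 1/8 * (t - b)^2) (1/4 * (t - b)) t := by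
      have := ((hasDerivAt_id t).sub_const b).pow 2
      have h2 := this.const_mul (1/8 : ℝ)
      refine h2.congr_deriv ?_; rw [show (2:ℕ) - 1 = 1 from rfl, pow_one]; simp only [id_eq]; ring
    have h3 : HasDerivAt (fun t : ℝ => lsig b * (t - b)) (lsig b) t := by
      have := ((hasDerivAt_id t).sub_const b).const_mul (lsig b)
      simpa using this
    simpa [hg, hg'] using ((h1.add h3).add_const (lphi b)).fun_sub (hasDerivAt_lphi t)
  have hmono : Monotone g' := by
    have hdg' : ∀ t, HasDerivAt g' (1/4 - Real.exp t / (1 + Real.exp t)^2) t := by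
      intro t
      have h1 : HasDerivAt (fun t : ℝ => 1/4 * (t - b) + lsig b) (1/4) t := by
        have := (((hasDerivAt_id t).sub_const b).const_mul (1/4 : ℝ)).add_const (lsig b)
        simpa using this
      simpa [hg'] using h1.fun_sub (hasDerivAt_lsig t)
    apply monotone_of_deriv_nonneg
    · exact fun t => (hdg' t).differentiableAt
    · intro t
      rw [(hdg' t).deriv]
      linarith [sig_deriv_le t]
  have hgb : g b = 0 := by simp [hg]
  have hga : 0 ≤ g a := by
    rcases lt_trichotomy a b with h | h | h
    · obtain ⟨c, hc, hceq⟩ := exists_hasDerivAt_eq_slope g g' h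
        (fun t _ => (hdg t).continuousAt.continuousWithinAt) (fun t _ => hdg t)
      have hc' : g' c ≤ 0 := by
        have := hmono hc.2.le
        simpa [hg', sub_self] using this
      have : (g b - g a) / (b - a) ≤ 0 := hceq ▸ hc'
      rw [hgb] at this
      have hba : 0 < b - a := by linarith
      have h2 := mul_le_mul_of_nonneg_right this hba.le
      rw [div_mul_cancel₀ _ hba.ne', zero_mul] at h2
      linarith
    · simp [h, hgb]
    · obtain ⟨c, hc, hceq⟩ := exists_hasDerivAt_eq_slope g g' h
        (fun t _ => (hdg t).continuousAt.continuousWithinAt) (fun t _ => hdg t)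
      have hc' : 0 ≤ g' c := by
        have := hmono hc.1.le
        simpa [hg', sub_self] using this
      have : 0 ≤ (g a - g b) / (a - b) := hceq ▸ hc'
      rw [hgb] at this
      have hba : 0 < a - b := by linarith
      have h2 := mul_le_mul_of_nonneg_right this hba.le
      rw [div_mul_cancel₀ _ hba.ne', zero_mul] at h2
      linarith
  simp only [hg] at hga
  linarith

noncomputable def LM {n p : ℕ} (X : Fin n → Fin p → ℝ) (i : Fin n) :
    (Fin p → ℝ) →L[ℝ] ℝ := ∑ j, X i j • (ContinuousLinearMap.proj j)

lemma LM_apply {n p : ℕ} (X : Fin n → Fin p → ℝ) (i : Fin n) (θ : Fin p → ℝ) :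
    LM X i θ = ∑ j, X i j * θ j := by
  simp [LM, ContinuousLinearMap.sum_apply]

lemma hasFDerivAt_loglik {n p : ℕ} (X : Fin n → Fin p → ℝ) (θ₀ : Fin p → ℝ)
    (y : Fin n → ℝ) :
    HasFDerivAt (fun ϑ => loglik X ϑ y)
      (∑ i, (y i - lsig (LM X i θ₀)) • LM X i) θ₀ := by
  apply HasFDerivAt.fun_sum
  intro i _
  have hL : HasFDerivAt (fun ϑ => LM X i ϑ) (LM X i) θ₀ := (LM X i).hasFDerivAt
  have h1 : HasFDerivAt (fun ϑ : Fin p → ℝ => y i * (∑ j, X i j * ϑ j))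
      (y i • LM X i) θ₀ := by
    have := hL.const_mul (y i)
    simpa [LM_apply] using this
  have h2 : HasFDerivAt (fun ϑ : Fin p → ℝ => lphi (∑ j, X i j * ϑ j))
      (lsig (LM X i θ₀) • LM X i) θ₀ := by
    have := (hasDerivAt_lphi (LM X i θ₀)).comp_hasFDerivAt θ₀ hL
    have h3 : (lphi ∘ (LM X i)) = fun ϑ : Fin p → ℝ => lphi (∑ j, X i j * ϑ j) := by
      ext ϑ; simp [LM_apply]
    rw [← h3]
    simpa [LM_apply] using this
  have := h1.fun_sub h2
  refine this.congr_fderiv ?_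
  ext ϑ
  simp only [ContinuousLinearMap.sum_apply, ContinuousLinearMap.smul_apply,
    ContinuousLinearMap.sub_apply, smul_eq_mul]
  ring

lemma taylorRem_eq {n p : ℕ} (X : Fin n → Fin p → ℝ) (θ₀ θ : Fin p → ℝ)
    (y : Fin n → ℝ) :
    taylorRem X θ₀ θ y
      = ∑ i, -(lphi (LM X i θ) - lphi (LM X i θ₀)
          - lsig (LM X i θ₀) * (LM X i θ - LM X i θ₀)) := by
  have hD := (hasFDerivAt_loglik X θ₀ y).fderiv
  rw [taylorRem, hD]
  simp only [ContinuousLinearMap.sum_apply, ContinuousLinearMap.smul_apply, smul_eq_mul,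
    loglik, map_sub]
  rw [← Finset.sum_sub_distrib, ← Finset.sum_sub_distrib, ← Finset.sum_sub_distrib]
  apply Finset.sum_congr rfl
  intro i _
  simp only [LM_apply, lphi]
  ring

/-- For `θ̄_S` the extension of `θ_S` by zeros outside `S`,
`𝓛_{n,θ̄_S}(y) ≥ −(1/4)‖X_S(θ_S−θ_{0,S})‖₂² − (1/4)‖X_{Sᶜ}θ_{0,Sᶜ}‖₂²`. -/
theorem taylor_remainder_submodel_bound {n p : ℕ} (X : Fin n → Fin p → ℝ)
    (θ₀ : Fin p → ℝ) (S : Finset (Fin p)) (θS : {j // j ∈ S} → ℝ) (y : Fin n → ℝ) :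
    taylorRem X θ₀ (fun j => if h : j ∈ S then θS ⟨j, h⟩ else 0) y
      ≥ -(1 / 4) * (∑ i, (∑ a : {j // j ∈ S}, X i a.val * (θS a - θ₀ a.val)) ^ 2)
        - (1 / 4) * (∑ i, (∑ j ∈ Finset.univ \ S, X i j * θ₀ j) ^ 2) := by
  set θb : Fin p → ℝ := fun j => if h : j ∈ S then θS ⟨j, h⟩ else 0 with hθb
  rw [taylorRem_eq]
  have hmain : ∀ i, -(lphi (LM X i θb) - lphi (LM X i θ₀)
      - lsig (LM X i θ₀) * (LM X i θb - LM X i θ₀))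
      ≥ -(1/4) * (∑ a : {j // j ∈ S}, X i a.val * (θS a - θ₀ a.val)) ^ 2
        - (1/4) * (∑ j ∈ Finset.univ \ S, X i j * θ₀ j) ^ 2 := by
    intro i
    set u : ℝ := ∑ a : {j // j ∈ S}, X i a.val * (θS a - θ₀ a.val) with hu
    set v : ℝ := ∑ j ∈ Finset.univ \ S, X i j * θ₀ j with hv
    have hdiff : LM X i θb - LM X i θ₀ = u - v := by
      rw [LM_apply, LM_apply]
      have hsplit : (∑ j, X i j * θ₀ j)
          = (∑ j ∈ S, X i j * θ₀ j) + v := by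
        rw [hv, ← Finset.sum_sdiff (Finset.subset_univ S)]
        ring
      have hθbsum : (∑ j, X i j * θb j) = ∑ a ∈ S.attach, X i a.val * θS a := by
        rw [← Finset.sum_sdiff (Finset.subset_univ S)]
        have h0 : ∑ j ∈ Finset.univ \ S, X i j * θb j = 0 := by
          apply Finset.sum_eq_zero
          intro j hj
          have : j ∉ S := (Finset.mem_sdiff.mp hj).2
          simp [hθb, this]
        rw [h0, zero_add, ← Finset.sum_attach S (fun j => X i j * θb j)]
        apply Finset.sum_congr rfl
        intro a _
        simp [hθb, a.prop]
      have huS : u = (∑ a ∈ S.attach, X i a.val * θS a)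
          - ∑ j ∈ S, X i j * θ₀ j := by
        rw [hu, Finset.univ_eq_attach, ← Finset.sum_attach S (fun j => X i j * θ₀ j),
          ← Finset.sum_sub_distrib]
        apply Finset.sum_congr rfl
        intro a _
        ring
      rw [hθbsum, hsplit, huS]
      ring
    have hkey := key_ineq (LM X i θb) (LM X i θ₀)
    rw [hdiff] at hkey
    rw [hdiff]
    nlinarith [hkey, sq_nonneg (u + v)]
  calc (∑ i, -(lphi (LM X i θb) - lphi (LM X i θ₀)
          - lsig (LM X i θ₀) * (LM X i θb - LM X i θ₀)))
      ≥ ∑ i, (-(1/4) * (∑ a : {j // j ∈ S}, X i a.val * (θS a - θ₀ a.val)) ^ 2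
          - (1/4) * (∑ j ∈ Finset.univ \ S, X i j * θ₀ j) ^ 2) :=
        Finset.sum_le_sum (fun i _ => hmain i)
    _ = -(1 / 4) * (∑ i, (∑ a : {j // j ∈ S}, X i a.val * (θS a - θ₀ a.val)) ^ 2)
        - (1 / 4) * (∑ i, (∑ j ∈ Finset.univ \ S, X i j * θ₀ j) ^ 2) := by
        rw [Finset.sum_sub_distrib, ← Finset.mul_sum, ← Finset.mul_sum]
end
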